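/- arXiv:1206.4258 — 3 statements merged into one kernel-verified Lean document; each statement's English description precedes it below -/
import Mathlib

section
/- Let r ∈ (0,1) be a rational number with continued fraction expansion r = [a_1, a_2, …, a_k], where each a_i is a positive integer and a_k ≥ 2, and let m = 2n ≥ 3 be an integer (n an integer or half-integer with n > 1). A rational number s belongs to the Γ_{r,n}-orbit of ∞ in ℚ ∪ {∞} if and only if there exist a positive integer t, an integer c, signs ε_1, …, ε_t ∈ {+1, −1}, and integers c_1, c_2, …, c_{2t−1} such that s = 2c + [ε_1·a, m·c_1, −ε_1·a^{−1}, 2c_2, ε_2·a, m·c_3, −ε_2·a^{−1}, 2c_4, …, 2c_{2t−2}, ε_t·a, m·c_{2t−1}, −ε_t·a^{−1}], where ε·a denotes the sequence (ε a_1, …, ε a_k), ε·a^{−1} denotes the reversed sequence (ε a_k, …, ε a_1), and the displayed sequence is the concatenation of the blocks (ε_i·a, m·c_{2i−1}, −ε_i·a^{−1}) for i = 1, …, t with the single entry 2c_{2i} inserted between the i-th and (i+1)-st blocks. -/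
/-!
Common setup: 2-bridge link groups, Heckoid groups, the words `u_s`,
Möbius transformations on `ℚ ∪ {∞}` (modelled as `Option ℚ`, with `none = ∞`),
the group `Γ_{r,n}`, continued fractions, and small–cancellation notions.
-/

/-- The free group `F` on the two generators `a`, `b`. -/
abbrev FG := FreeGroup (Fin 2)

namespace Heckoid

/-- The generator `a`. -/
def ga : FG := FreeGroup.of 0

/-- The generator `b`. -/
def gb : FG := FreeGroup.of 1

/-- `ε_i = (−1)^⌊ i q / p ⌋`, as an element `±1` of `ℤ`. -/
def epsSign (q : ℤ) (p : ℕ) (i : ℕ) : ℤ := (-1) ^ (Int.fdiv ((i : ℤ) * q) (p : ℤ)).natAbs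

/-- The letter at position `i`: `b` if `i` is odd, `a` if `i` is even. -/
def genAt (i : ℕ) : FG := if i % 2 = 1 then gb else ga

/-- `v = b^{ε₁} a^{ε₂} b^{ε₃} ⋯` (`p − 1` alternating letters). -/
def vWord (q : ℤ) (p : ℕ) : FG :=
  ((List.range (p - 1)).map fun i => genAt (i + 1) ^ epsSign q p (i + 1)).prod

/-- The word `u_s` associated with a rational number `s = q/p` in lowest terms:
`u_s = a v b^{(−1)^q} v⁻¹` if `p` is odd, and `u_s = a v a⁻¹ v⁻¹` if `p` is even. -/
def uWord (s : ℚ) : FG :=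
  if s.den % 2 = 1 then
    ga * vWord s.num s.den * gb ^ ((-1 : ℤ) ^ s.num.natAbs) * (vWord s.num s.den)⁻¹
  else
    ga * vWord s.num s.den * ga⁻¹ * (vWord s.num s.den)⁻¹

/-- The even Heckoid group `H(r;n) = ⟨a, b ∣ u_r^n⟩`. -/
abbrev HeckoidGroup (r : ℚ) (n : ℕ) := PresentedGroup ({uWord r ^ n} : Set FG)

/-- The natural projection `F → H(r;n)`. -/
def hMk (r : ℚ) (n : ℕ) : FG →* HeckoidGroup r n := PresentedGroup.mk _

/-- The 2-bridge link group `G(K(s)) = ⟨a, b ∣ u_s⟩`. -/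
abbrev TwoBridgeGroup (s : ℚ) := PresentedGroup ({uWord s} : Set FG)

/-- The natural projection `F → G(K(s))`. -/
def tMk (s : ℚ) : FG →* TwoBridgeGroup s := PresentedGroup.mk _

/-- An epimorphism `G(K(s)) → H(r;n)` is upper-meridian-pair-preserving if it is surjective and
the unordered pair of conjugacy classes of the images of `a`, `b` coincides with the unordered
pair of the conjugacy classes of `a`, `b` in `H(r;n)`. -/
def IsUMPP (s r : ℚ) (n : ℕ) (φ : TwoBridgeGroup s →* HeckoidGroup r n) : Prop :=
  Function.Surjective φ ∧
    ((IsConj (φ (tMk s ga)) (hMk r n ga) ∧ IsConj (φ (tMk s gb)) (hMk r n gb)) ∨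
     (IsConj (φ (tMk s ga)) (hMk r n gb) ∧ IsConj (φ (tMk s gb)) (hMk r n ga)))

/-! ### Möbius transformations of `ℚ ∪ {∞}` -/

/-- The Möbius transformation of the matrix `[[A,B],[C,D]]` as a function on
`ℚ ∪ {∞} = Option ℚ` (`none` is `∞`). -/
def mfun (A B C D : ℚ) : Option ℚ → Option ℚ
  | none => if C = 0 then none else some (A / C)
  | some x => if C * x + D = 0 then none else some ((A * x + B) / (C * x + D))

theorem mfun_leftInv (A B C D : ℚ) (h : A * D - B * C ≠ 0) :
    Function.LeftInverse (mfun D (-B) (-C) A) (mfun A B C D) := by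
  intro x
  cases x with
  | none =>
    by_cases hC : C = 0
    · simp [mfun, hC]
    · have h1 : -C * (A / C) + A = 0 := by field_simp; ring
      simp only [mfun, if_neg hC, if_pos h1]
  | some x =>
    by_cases hx : C * x + D = 0
    · have hC : C ≠ 0 := by
        rintro rfl
        simp only [zero_mul, zero_add] at hx
        rw [hx] at h
        simp at h
      simp only [mfun, if_pos hx]
      have h2 : ¬(-C = 0) := by simpa using hC
      simp only [mfun, if_neg h2]
      congr 1
      field_simp
      linarith
    · have key : -C * ((A * x + B) / (C * x + D)) + A = (A * D - B * C) / (C * x + D) := by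
        field_simp
        ring
      have hne : ¬(-C * ((A * x + B) / (C * x + D)) + A = 0) := by
        rw [key]
        exact div_ne_zero h hx
      simp only [mfun, if_neg hx, if_neg hne]
      congr 1
      have e1 : D * ((A * x + B) / (C * x + D)) + -B = ((A * D - B * C) * x) / (C * x + D) := by
        rw [eq_div_iff hx, add_mul, mul_assoc, div_mul_cancel₀ _ hx]
        ring
      rw [e1, key, div_eq_iff (div_ne_zero h hx)]
      field_simp

/-- The Möbius transformation of an invertible matrix `[[A,B],[C,D]]`, as a bijection of
`ℚ ∪ {∞}`. -/
def moebius (A B C D : ℚ) (h : A * D - B * C ≠ 0) : Equiv.Perm (Option ℚ) where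
  toFun := mfun A B C D
  invFun := mfun D (-B) (-C) A
  left_inv := mfun_leftInv A B C D h
  right_inv := fun x => by
    have h' : D * A - -B * -C ≠ 0 := fun hc => h (by linear_combination hc)
    have := mfun_leftInv D (-B) (-C) A h' x
    simpa using this

/-- `ρ(s) = −s`. -/
def rhoPerm : Equiv.Perm (Option ℚ) := moebius (-1) 0 0 1 (by norm_num)

/-- `ρ'(s) = 2 − s`. -/
def rhoPerm' : Equiv.Perm (Option ℚ) := moebius (-1) 2 0 1 (by norm_num)

/-- The parabolic Möbius transformation centered at `r = q/p`, translating by `m` units: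
the Möbius transformation of `[[1+mpq, −mq²],[mp², 1−mpq]]`. -/
def cPerm (r : ℚ) (m : ℤ) : Equiv.Perm (Option ℚ) :=
  moebius (1 + (m : ℚ) * r.den * r.num) (-((m : ℚ) * r.num ^ 2)) ((m : ℚ) * r.den ^ 2)
    (1 - (m : ℚ) * r.den * r.num) (ne_of_eq_of_ne (by ring) one_ne_zero)

/-- The group `Γ_{r,n}` (`m = 2n`): the subgroup of the bijections of `ℚ ∪ {∞}` generated by
`ρ`, `ρ'` and the parabolic `c`. -/
def Gamma (r : ℚ) (m : ℤ) : Subgroup (Equiv.Perm (Option ℚ)) :=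
  Subgroup.closure {rhoPerm, rhoPerm', cPerm r m}

/-- `y` is in the `Γ_{r,n}`-orbit of `x` (where `m = 2n`). -/
def orbitRel (r : ℚ) (m : ℤ) (x y : Option ℚ) : Prop :=
  ∃ g ∈ Gamma r m, g x = y

/-! ### Continued fractions -/

/-- The matrix `[[0,1],[1,b₁]] ⋯ [[0,1],[1,b_l]]` of a continued fraction. -/
def cfMat : List ℤ → Matrix (Fin 2) (Fin 2) ℤ
  | [] => 1
  | b :: L => !![0, 1; 1, b] * cfMat L

/-- The value in `ℚ ∪ {∞}` of the continued fraction
`[b₁, …, b_l] = 1/(b₁ + 1/(b₂ + ⋯ + 1/b_l))`: the image of `0` under the Möbius transformation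
of `cfMat`. -/
def cfValue (L : List ℤ) : Option ℚ :=
  mfun ((cfMat L 0 0 : ℤ) : ℚ) ((cfMat L 0 1 : ℤ) : ℚ) ((cfMat L 1 0 : ℤ) : ℚ)
    ((cfMat L 1 1 : ℤ) : ℚ) (some 0)

/-! ### Small cancellation notions -/

/-- The symmetrized set `R` generated by `u_r^n`: all cyclic permutations of the reduced words
of `u_r^n` and of `u_r^{−n}`. -/
def SymmSet (r : ℚ) (n : ℕ) : Set FG :=
  {w | (∃ k, w.toWord = (uWord r ^ n).toWord.rotate k) ∨
       (∃ k, w.toWord = ((uWord r ^ n)⁻¹).toWord.rotate k)}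

/-- A piece relative to `R`: a nonempty word which is a common initial segment of two distinct
elements of `R`. -/
def IsPiece (r : ℚ) (n : ℕ) (w : FG) : Prop :=
  w ≠ 1 ∧ ∃ x ∈ SymmSet r n, ∃ y ∈ SymmSet r n, x ≠ y ∧
    w.toWord <+: x.toWord ∧ w.toWord <+: y.toWord

/-- `w` is a product of `k` pieces: a concatenation, without cancellation, of `k` pieces. -/
def IsProductOfPieces (r : ℚ) (n : ℕ) (k : ℕ) (w : FG) : Prop :=
  ∃ ws : List FG, ws.length = k ∧ (∀ v ∈ ws, IsPiece r n v) ∧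
    w.toWord = (ws.map FreeGroup.toWord).flatten

/-- The product `x * y` is reduced without cancellation. -/
def NoCancel (x y : FG) : Prop := (x * y).toWord = x.toWord ++ y.toWord

/-- Small cancellation condition `C(p)`: no element of `R` is a product of fewer than `p`
pieces. -/
def SatisfiesC (r : ℚ) (n : ℕ) (p : ℕ) : Prop :=
  ∀ w ∈ SymmSet r n, ∀ k < p, ¬ IsProductOfPieces r n k w

/-- Small cancellation condition `T(4)`. -/
def SatisfiesT4 (r : ℚ) (n : ℕ) : Prop :=
  ∀ r₁ ∈ SymmSet r n, ∀ r₂ ∈ SymmSet r n, ∀ r₃ ∈ SymmSet r n,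
    r₂ ≠ r₁⁻¹ → r₃ ≠ r₂⁻¹ → r₁ ≠ r₃⁻¹ →
    NoCancel r₁ r₂ ∨ NoCancel r₂ r₃ ∨ NoCancel r₃ r₁

/-- `w` is a subword of the cyclic word `(u)`: an initial segment of some cyclic permutation
of the reduced word of `u`. -/
def IsCyclicSubword (w u : FG) : Prop := ∃ k, w.toWord <+: u.toWord.rotate k

end Heckoid

namespace Heckoid

/-- The sequence
`(ε₁·a, m·c₁, −ε₁·a⁻¹, 2c₂, ε₂·a, m·c₃, −ε₂·a⁻¹, 2c₄, …, ε_t·a, m·c_{2t−1}, −ε_t·a⁻¹)`,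
where `a = (a₁, …, a_k)` and `a⁻¹` is the reversed sequence; the entry `2c_{2i}` is inserted
between the `i`-th and `(i+1)`-st blocks. Here `eps i` is `ε_{i+1}` and `cs j` is `c_j`. -/
def hekSeq (A : List ℤ) (m : ℤ) (t : ℕ) (eps cs : ℕ → ℤ) : List ℤ :=
  ((List.range t).map fun i =>
    (if i = 0 then ([] : List ℤ) else [2 * cs (2 * i)]) ++
      (A.map fun x => eps i * x) ++ [m * cs (2 * i + 1)] ++
      (A.reverse.map fun x => -eps i * x)).flatten

/-!
Every generator of `Γ_{r,n}` is the Möbius transformation of a matrix, so the computation takes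
place in `GL₂(ℚ)`. Let `N` be the matrix of the continued fraction `a = (a₁, …, a_k)`. Since
`N · 0 = r` and `det N = (−1)^k`, the second column of `N` is `±(q, p)`. Reversing a continued
fraction transposes its matrix, and negating it conjugates the matrix by `diag(−1, 1)` up to the
sign `(−1)^k`. Hence the block `(a, w, −a⁻¹)` followed by the inversion `s ↦ 1/s` has matrix
`N [[1,0],[w,1]] N⁻¹`, the parabolic at `r` with parameter `(−1)^k w`. For `ε = −1` the block
gives the conjugate of that parabolic by `ρ`, and a separator `2c` gives the translation
`s ↦ s + 2c`, which is `(ρ'ρ)^c`. So every value of an expansion is the image of `∞` under an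
element of `Γ_{r,n}`. Conversely, `∞` together with all such values is invariant under `ρ` and `ρ'`
(negate the sequence) and under the powers of `c` (prepend a block).
-/

open scoped Matrix

/-- `OnePoint ℚ` is `Option ℚ`, and Mathlib's action of `GL₂(ℚ)` on it is the Möbius action. -/
def moebiusHom : GL (Fin 2) ℚ →* Equiv.Perm (Option ℚ) :=
  MulAction.toPermHom (GL (Fin 2) ℚ) (OnePoint ℚ)

theorem moebiusHom_apply (g : GL (Fin 2) ℚ) (x : Option ℚ) :
    moebiusHom g x = mfun (g 0 0) (g 0 1) (g 1 0) (g 1 1) x := by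
  cases x with
  | none => exact OnePoint.smul_infty_eq_ite g
  | some x => exact OnePoint.smul_some_eq_ite

theorem mfun_smul {c : ℚ} (hc : c ≠ 0) (a b d e : ℚ) (x : Option ℚ) :
    mfun (c * a) (c * b) (c * d) (c * e) x = mfun a b d e x := by
  cases x with
  | none => simp [mfun, hc, mul_div_mul_left]
  | some x =>
    simp only [mfun, mul_assoc, ← mul_add, mul_eq_zero, hc, false_or, mul_div_mul_left _ _ hc]

theorem moebiusHom_eq_of_val_eq_smul {g h : GL (Fin 2) ℚ} {c : ℚ} (hc : c ≠ 0)
    (hgh : (g : Matrix (Fin 2) (Fin 2) ℚ) = c • (h : Matrix (Fin 2) (Fin 2) ℚ)) :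
    moebiusHom g = moebiusHom h := by
  ext x : 1
  simp only [moebiusHom_apply, hgh, Matrix.smul_apply, smul_eq_mul, mfun_smul hc]

def glOfEntries (a b c d : ℚ) (h : a * d - b * c ≠ 0) : GL (Fin 2) ℚ :=
  Matrix.GeneralLinearGroup.mkOfDetNeZero !![a, b; c, d] (by rwa [Matrix.det_fin_two_of])

@[simp]
theorem val_glOfEntries (a b c d : ℚ) (h : a * d - b * c ≠ 0) :
    (glOfEntries a b c d h : Matrix (Fin 2) (Fin 2) ℚ) = !![a, b; c, d] :=
  rfl

theorem moebiusHom_glOfEntries (a b c d : ℚ) (h : a * d - b * c ≠ 0) :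
    moebiusHom (glOfEntries a b c d h) = moebius a b c d h :=
  Equiv.ext fun x => moebiusHom_apply _ x

def reflection : GL (Fin 2) ℚ := glOfEntries (-1) 0 0 1 (by norm_num)

def reflection' : GL (Fin 2) ℚ := glOfEntries (-1) 2 0 1 (by norm_num)

def inversion : GL (Fin 2) ℚ := glOfEntries 0 1 1 0 (by norm_num)

def cfStep (b : ℚ) : GL (Fin 2) ℚ := glOfEntries 0 1 1 b (by norm_num)

/-- The parabolic transformation fixing `q / p`. -/
def parabolic (p q j : ℚ) : GL (Fin 2) ℚ :=
  glOfEntries (1 + j * p * q) (-(j * q ^ 2)) (j * p ^ 2) (1 - j * p * q)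
    (ne_of_eq_of_ne (by ring) one_ne_zero)

/-- `s ↦ s + k`: the parabolic fixing `∞ = 1/0`. -/
def translation (k : ℚ) : GL (Fin 2) ℚ := parabolic 0 1 (-k)

theorem rhoPerm_eq_moebiusHom : rhoPerm = moebiusHom reflection :=
  (moebiusHom_glOfEntries _ _ _ _ _).symm

theorem rhoPerm'_eq_moebiusHom : rhoPerm' = moebiusHom reflection' :=
  (moebiusHom_glOfEntries _ _ _ _ _).symm

theorem cPerm_eq_moebiusHom (r : ℚ) (m : ℤ) : cPerm r m = moebiusHom (parabolic r.den r.num m) :=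
  (moebiusHom_glOfEntries _ _ _ _ _).symm

theorem reflection_mul_reflection : reflection * reflection = 1 := by
  ext i j; fin_cases i <;> fin_cases j <;> simp [reflection]

theorem reflection'_mul_reflection' : reflection' * reflection' = 1 := by
  ext i j; fin_cases i <;> fin_cases j <;> simp [reflection']

theorem reflection'_mul_reflection : reflection' * reflection = translation 2 := by
  ext i j; fin_cases i <;> fin_cases j <;>
    simp [reflection, reflection', translation, parabolic]

theorem inversion_mul_translation (k : ℚ) : inversion * translation k = cfStep k := by
  ext i j; fin_cases i <;> fin_cases j <;>
    simp [inversion, translation, parabolic, cfStep]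

theorem parabolic_mul_parabolic (p q j k : ℚ) :
    parabolic p q j * parabolic p q k = parabolic p q (j + k) := by
  ext i l; fin_cases i <;> fin_cases l <;> simp [parabolic] <;> ring

theorem parabolic_zero (p q : ℚ) : parabolic p q 0 = 1 := by
  ext i l; fin_cases i <;> fin_cases l <;> simp [parabolic]

theorem parabolic_zpow (p q j : ℚ) (n : ℤ) : parabolic p q j ^ n = parabolic p q (n * j) := by
  induction n using Int.induction_on with
  | zero => simp [parabolic_zero]
  | succ n ih => rw [zpow_add_one, ih, parabolic_mul_parabolic]; push_cast; ring_nf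
  | pred n ih =>
    rw [zpow_sub_one, ih, inv_eq_of_mul_eq_one_right (b := parabolic p q (-j))
      (by rw [parabolic_mul_parabolic, add_neg_cancel, parabolic_zero]), parabolic_mul_parabolic]
    push_cast; ring_nf

theorem parabolic_smul {σ : ℚ} (hσ : σ * σ = 1) (p q j : ℚ) :
    parabolic (σ * p) (σ * q) j = parabolic p q j := by
  unfold parabolic
  congr 1
  · linear_combination j * p * q * hσ
  · linear_combination -j * q ^ 2 * hσ
  · linear_combination j * p ^ 2 * hσ
  · linear_combination -j * p * q * hσ

theorem moebiusHom_reflection_apply (x : Option ℚ) :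
    moebiusHom reflection x = x.map Neg.neg := by
  cases x <;> simp [moebiusHom_apply, reflection, mfun]

theorem moebiusHom_reflection'_apply (x : Option ℚ) :
    moebiusHom reflection' x = x.map (2 - ·) := by
  cases x <;> simp [moebiusHom_apply, reflection', mfun, neg_add_eq_sub]

theorem moebiusHom_translation_apply (k : ℚ) (x : Option ℚ) :
    moebiusHom (translation k) x = x.map (· + k) := by
  cases x <;> simp [moebiusHom_apply, translation, parabolic, mfun]

theorem moebiusHom_inversion_none : moebiusHom inversion none = some 0 := by
  simp [moebiusHom_apply, inversion, mfun]

theorem moebiusHom_reflection_mul_inversion :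
    moebiusHom (reflection * inversion) = moebiusHom (inversion * reflection) :=
  moebiusHom_eq_of_val_eq_smul (c := -1) (by norm_num) (by
    ext i j; fin_cases i <;> fin_cases j <;> simp [reflection, inversion])

section Gamma

variable (r : ℚ) (m : ℤ)

theorem reflection_mem_Gamma : moebiusHom reflection ∈ Gamma r m :=
  rhoPerm_eq_moebiusHom ▸ Subgroup.subset_closure (by simp)

theorem reflection'_mem_Gamma : moebiusHom reflection' ∈ Gamma r m :=
  rhoPerm'_eq_moebiusHom ▸ Subgroup.subset_closure (by simp)

theorem parabolic_mem_Gamma (k : ℤ) :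
    moebiusHom (parabolic r.den r.num ((m * k : ℤ) : ℚ)) ∈ Gamma r m := by
  rw [show ((m * k : ℤ) : ℚ) = (k : ℚ) * (m : ℚ) by push_cast; ring, ← parabolic_zpow, map_zpow]
  exact zpow_mem (cPerm_eq_moebiusHom r m ▸ Subgroup.subset_closure (by simp)) k

theorem translation_mem_Gamma (c : ℤ) :
    moebiusHom (translation ((2 * c : ℤ) : ℚ)) ∈ Gamma r m := by
  have h : translation ((2 * c : ℤ) : ℚ) = (reflection' * reflection) ^ c := by
    rw [reflection'_mul_reflection, translation, translation, parabolic_zpow]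
    push_cast; ring_nf
  rw [h, map_zpow, map_mul]
  exact zpow_mem (mul_mem (reflection'_mem_Gamma r m) (reflection_mem_Gamma r m)) c

end Gamma

def cfGL : List ℤ → GL (Fin 2) ℚ
  | [] => 1
  | b :: L => cfStep b * cfGL L

theorem cfGL_singleton (b : ℤ) : cfGL [b] = cfStep b := mul_one _

theorem cfGL_append (L L' : List ℤ) : cfGL (L ++ L') = cfGL L * cfGL L' := by
  induction L with
  | nil => simp [cfGL]
  | cons b L ih => simp [cfGL, ih, mul_assoc]

theorem cfGL_append_cons (L L' : List ℤ) (b : ℤ) :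
    cfGL (L ++ b :: L') = cfGL L * inversion * translation b * cfGL L' := by
  rw [cfGL_append, cfGL, ← inversion_mul_translation]
  simp only [mul_assoc]

theorem val_cfGL (L : List ℤ) :
    (cfGL L : Matrix (Fin 2) (Fin 2) ℚ) = (cfMat L).map (Int.castRingHom ℚ) := by
  induction L with
  | nil => simp [cfGL, cfMat]
  | cons b L ih =>
    rw [cfGL, cfMat, Units.val_mul, ih, Matrix.map_mul]
    congr 1
    ext i j; fin_cases i <;> fin_cases j <;> simp [cfStep]

theorem cfValue_eq_moebiusHom (L : List ℤ) : cfValue L = moebiusHom (cfGL L) (some 0) := by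
  rw [moebiusHom_apply, val_cfGL]
  rfl

theorem det_cfMat (L : List ℤ) : (cfMat L).det = (-1) ^ L.length := by
  induction L with
  | nil => simp [cfMat]
  | cons b L ih =>
    rw [cfMat, Matrix.det_mul, ih, Matrix.det_fin_two_of, List.length_cons, pow_succ]
    ring

theorem det_val_cfGL (L : List ℤ) :
    (cfGL L : Matrix (Fin 2) (Fin 2) ℚ).det = (-1) ^ L.length := by
  rw [val_cfGL, ← RingHom.mapMatrix_apply, ← RingHom.map_det, det_cfMat]
  simp

theorem val_cfGL_reverse (L : List ℤ) :
    (cfGL L.reverse : Matrix (Fin 2) (Fin 2) ℚ) = (cfGL L : Matrix (Fin 2) (Fin 2) ℚ)ᵀ := by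
  induction L with
  | nil => simp [cfGL]
  | cons b L ih =>
    rw [List.reverse_cons, cfGL_append, Units.val_mul, ih, cfGL_singleton, cfGL, Units.val_mul,
      Matrix.transpose_mul]
    congr 1
    ext i j; fin_cases i <;> fin_cases j <;> simp [cfStep]

theorem val_cfGL_map_neg (L : List ℤ) :
    (cfGL (L.map Neg.neg) : Matrix (Fin 2) (Fin 2) ℚ) =
      (-1 : ℚ) ^ L.length •
        ((reflection * cfGL L * reflection : GL (Fin 2) ℚ) : Matrix (Fin 2) (Fin 2) ℚ) := by
  induction L with
  | nil => rw [cfGL, mul_one, reflection_mul_reflection]; simp [cfGL]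
  | cons b L ih =>
    have hstep : (cfStep (-b : ℤ) : Matrix (Fin 2) (Fin 2) ℚ) =
        (-1 : ℚ) • ((reflection * cfStep b * reflection : GL (Fin 2) ℚ) :
          Matrix (Fin 2) (Fin 2) ℚ) := by
      ext i j; fin_cases i <;> fin_cases j <;> simp [cfStep, reflection]
    have hconj : reflection * cfStep b * reflection * (reflection * cfGL L * reflection) =
        reflection * (cfStep b * cfGL L) * reflection := by
      simp only [← mul_assoc, mul_assoc _ reflection reflection, reflection_mul_reflection, mul_one]
    rw [List.map_cons, cfGL, Units.val_mul, hstep, ih, Matrix.smul_mul, Matrix.mul_smul,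
      smul_smul, List.length_cons, pow_succ', cfGL, ← Units.val_mul, hconj]

theorem moebiusHom_cfGL_map_neg (L : List ℤ) :
    moebiusHom (cfGL (L.map Neg.neg)) = moebiusHom (reflection * cfGL L * reflection) :=
  moebiusHom_eq_of_val_eq_smul (pow_ne_zero _ (by norm_num)) (val_cfGL_map_neg L)

theorem moebiusHom_cfGL_map_neg_mul_inversion (L : List ℤ) :
    moebiusHom (cfGL (L.map Neg.neg) * inversion) =
      moebiusHom (reflection * (cfGL L * inversion) * reflection) := by
  simp only [map_mul, moebiusHom_cfGL_map_neg, mul_assoc]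
  rw [← map_mul moebiusHom reflection inversion, moebiusHom_reflection_mul_inversion, map_mul]

theorem cfValue_map_neg (L : List ℤ) : cfValue (L.map Neg.neg) = (cfValue L).map Neg.neg := by
  simp [cfValue_eq_moebiusHom, moebiusHom_cfGL_map_neg, moebiusHom_reflection_apply]

theorem cfGL_append_cons_reverse_map_neg_mul_inversion (A : List ℤ) (w : ℤ) :
    cfGL (A ++ w :: A.reverse.map Neg.neg) * inversion =
      parabolic (cfGL A 1 1) (cfGL A 0 1) ((-1) ^ A.length * w) := by
  have hdet := det_val_cfGL A
  have hδ : ((-1 : ℚ) ^ A.length) * (-1) ^ A.length = 1 := by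
    rw [← mul_pow]; norm_num
  apply Units.ext
  rw [cfGL_append, cfGL, Units.val_mul, Units.val_mul, Units.val_mul, val_cfGL_map_neg,
    List.length_reverse, Units.val_mul, Units.val_mul, val_cfGL_reverse]
  generalize (-1 : ℚ) ^ A.length = δ at hdet hδ ⊢
  generalize (cfGL A : Matrix (Fin 2) (Fin 2) ℚ) = N at hdet ⊢
  obtain ⟨a, b, c, d, rfl⟩ : ∃ a b c d, N = !![a, b; c, d] := ⟨_, _, _, _, N.eta_fin_two⟩
  rw [Matrix.det_fin_two_of] at hdet
  have ht : !![a, b; c, d]ᵀ = !![a, c; b, d] := by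
    ext i j; fin_cases i <;> fin_cases j <;> rfl
  simp only [cfStep, reflection, inversion, parabolic,
    val_glOfEntries, ht, Matrix.mul_fin_two]
  ext i j; fin_cases i <;> fin_cases j <;> simp
  · linear_combination δ * hdet + hδ
  · ring
  · ring
  · linear_combination δ * hdet + hδ

theorem exists_sign_eq_num_den {b d : ℤ} {r : ℚ} (hbd : IsCoprime b d) (hd : d ≠ 0)
    (hr : (b : ℚ) / d = r) : ∃ σ : ℤ, σ * σ = 1 ∧ b = σ * r.num ∧ d = σ * r.den := by
  have hden : (r.den : ℤ) ≠ 0 := by exact_mod_cast r.den_ne_zero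
  have hcross : b * r.den = r.num * d := by
    rw [← Rat.num_div_den r, div_eq_div_iff (by exact_mod_cast hd) (by positivity)] at hr
    exact_mod_cast hr
  have hd_dvd : d ∣ r.den := hbd.symm.dvd_of_dvd_mul_left ⟨r.num, by linarith⟩
  have hden_dvd : (r.den : ℤ) ∣ d := r.isCoprime_num_den.symm.dvd_of_dvd_mul_left ⟨b, by linarith⟩
  obtain ⟨σ, hσ, hdσ⟩ : ∃ σ : ℤ, σ * σ = 1 ∧ d = σ * r.den := by
    rcases Int.associated_iff.1 (associated_of_dvd_dvd hd_dvd hden_dvd) with h | h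
    · exact ⟨1, by norm_num, by simp [h]⟩
    · exact ⟨-1, by norm_num, by simp [h]⟩
  refine ⟨σ, hσ, mul_right_cancel₀ hden ?_, hdσ⟩
  rw [hcross, hdσ]
  ring

theorem exists_sign_cfGL_eq_num_den {A : List ℤ} {r : ℚ} (hcf : cfValue A = some r) :
    ∃ σ : ℚ, σ * σ = 1 ∧
      (cfGL A : Matrix (Fin 2) (Fin 2) ℚ) 0 1 = σ * r.num ∧
      (cfGL A : Matrix (Fin 2) (Fin 2) ℚ) 1 1 = σ * r.den := by
  have hcop : IsCoprime (cfMat A 0 1) (cfMat A 1 1) := by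
    have hdet := det_cfMat A
    rw [Matrix.det_fin_two] at hdet
    refine ⟨-(-1) ^ A.length * cfMat A 1 0, (-1) ^ A.length * cfMat A 0 0, ?_⟩
    linear_combination (-1) ^ A.length * hdet + (by rw [← mul_pow]; norm_num :
      ((-1 : ℤ) ^ A.length) * (-1) ^ A.length = 1)
  simp only [cfValue, mfun, mul_zero, zero_add] at hcf
  split_ifs at hcf with hd
  obtain ⟨σ, hσ, hb, hdσ⟩ := exists_sign_eq_num_den hcop (by exact_mod_cast hd)
    (Option.some_injective _ hcf)
  refine ⟨σ, by exact_mod_cast hσ, ?_, ?_⟩ <;> simp [val_cfGL, hb, hdσ]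

def hekBlock (A : List ℤ) (ε w : ℤ) : List ℤ :=
  A.map (ε * ·) ++ w :: A.reverse.map (-ε * ·)

theorem hekBlock_one (A : List ℤ) (w : ℤ) : hekBlock A 1 w = A ++ w :: A.reverse.map Neg.neg := by
  simp [hekBlock]

theorem hekBlock_map_neg (A : List ℤ) (ε w : ℤ) :
    (hekBlock A ε w).map Neg.neg = hekBlock A (-ε) (-w) := by
  simp [hekBlock, Function.comp_def]

theorem hekSeq_eq_flatten (A : List ℤ) (m : ℤ) (t : ℕ) (eps cs : ℕ → ℤ) :
    hekSeq A m t eps cs = ((List.range t).map fun i =>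
      (if i = 0 then [] else [2 * cs (2 * i)]) ++
        hekBlock A (eps i) (m * cs (2 * i + 1))).flatten := by
  simp [hekSeq, hekBlock]

theorem hekSeq_one (A : List ℤ) (m : ℤ) (eps cs : ℕ → ℤ) :
    hekSeq A m 1 eps cs = hekBlock A (eps 0) (m * cs 1) := by
  simp [hekSeq_eq_flatten]

theorem hekSeq_succ (A : List ℤ) (m : ℤ) {t : ℕ} (ht : t ≠ 0) (eps cs : ℕ → ℤ) :
    hekSeq A m (t + 1) eps cs =
      hekSeq A m t eps cs ++ 2 * cs (2 * t) :: hekBlock A (eps t) (m * cs (2 * t + 1)) := by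
  simp [hekSeq_eq_flatten, List.range_succ, ht]

theorem hekSeq_neg (A : List ℤ) (m : ℤ) (t : ℕ) (eps cs : ℕ → ℤ) :
    hekSeq A m t (-eps) (-cs) = (hekSeq A m t eps cs).map Neg.neg := by
  rw [hekSeq_eq_flatten, hekSeq_eq_flatten, List.map_flatten, List.map_map]
  congr 1
  refine List.map_congr_left fun i _ => ?_
  by_cases hi : i = 0 <;> simp [hi, hekBlock_map_neg]

theorem hekSeq_cons (A : List ℤ) (m : ℤ) {t : ℕ} (ht : 0 < t) (eps cs : ℕ → ℤ) (ε w c : ℤ) :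
    hekSeq A m (t + 1) (fun i => if i = 0 then ε else eps (i - 1))
        (fun j => if j = 1 then w else if j = 2 then c else cs (j - 2)) =
      hekBlock A ε (m * w) ++ 2 * c :: hekSeq A m t eps cs := by
  induction t with
  | zero => omega
  | succ t ih =>
    rcases Nat.eq_zero_or_pos t with rfl | ht'
    · simp [hekSeq_succ, hekSeq_one]
    · rw [hekSeq_succ _ _ (by omega), ih ht', hekSeq_succ _ _ ht'.ne']
      simp [ht'.ne', show 2 * (t + 1) - 2 = 2 * t by omega,
        show 2 * (t + 1) + 1 - 2 = 2 * t + 1 by omega]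

section Expansion

variable {A : List ℤ} {r : ℚ}

theorem cfGL_hekBlock_mul_inversion (hcf : cfValue A = some r) (m k : ℤ) :
    cfGL (hekBlock A 1 (m * ((-1) ^ A.length * k))) * inversion =
      parabolic r.den r.num ((m * k : ℤ) : ℚ) := by
  obtain ⟨σ, hσ, hb, hd⟩ := exists_sign_cfGL_eq_num_den hcf
  rw [hekBlock_one, cfGL_append_cons_reverse_map_neg_mul_inversion, hb, hd, parabolic_smul hσ]
  congr 1
  push_cast
  linear_combination (m : ℚ) * k * (by rw [← mul_pow]; norm_num :
    ((-1 : ℚ) ^ A.length) * (-1) ^ A.length = 1)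

theorem hekBlock_mem_Gamma (hcf : cfValue A = some r) (m : ℤ) {ε : ℤ} (hε : ε = 1 ∨ ε = -1)
    (k : ℤ) : moebiusHom (cfGL (hekBlock A ε (m * k)) * inversion) ∈ Gamma r m := by
  obtain ⟨k, rfl⟩ : ∃ k', k = (-1) ^ A.length * k' :=
    ⟨(-1) ^ A.length * k, by rw [← mul_assoc, ← mul_pow]; norm_num⟩
  rcases hε with rfl | rfl
  · rw [cfGL_hekBlock_mul_inversion hcf]
    exact parabolic_mem_Gamma r m k
  · -- `hekBlock A (-1) w` is the negation of `hekBlock A 1 (-w)`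
    rw [← neg_neg (m * _), ← neg_neg (-1 : ℤ), ← hekBlock_map_neg, neg_neg,
      moebiusHom_cfGL_map_neg_mul_inversion, ← mul_neg, ← mul_neg, cfGL_hekBlock_mul_inversion hcf,
      map_mul, map_mul]
    exact mul_mem (mul_mem (reflection_mem_Gamma r m) (parabolic_mem_Gamma r m _))
      (reflection_mem_Gamma r m)

theorem hekSeq_mem_Gamma (hcf : cfValue A = some r) (m : ℤ) {t : ℕ} (ht : 0 < t)
    {eps : ℕ → ℤ} (heps : ∀ i < t, eps i = 1 ∨ eps i = -1) (cs : ℕ → ℤ) :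
    moebiusHom (cfGL (hekSeq A m t eps cs) * inversion) ∈ Gamma r m := by
  induction t with
  | zero => omega
  | succ t ih =>
    rcases Nat.eq_zero_or_pos t with rfl | ht'
    · rw [hekSeq_one]
      exact hekBlock_mem_Gamma hcf m (heps 0 one_pos) _
    · rw [hekSeq_succ _ _ ht'.ne', cfGL_append_cons, mul_assoc _ (cfGL _), map_mul, map_mul]
      exact mul_mem (mul_mem (ih ht' fun i hi => heps i (by omega)) (translation_mem_Gamma r m _))
        (hekBlock_mem_Gamma hcf m (heps t (by omega)) _)

def HasHeckoidExpansion (A : List ℤ) (m : ℤ) (s : ℚ) : Prop :=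
  ∃ t : ℕ, 0 < t ∧ ∃ (c : ℤ) (eps cs : ℕ → ℤ),
    (∀ i < t, eps i = 1 ∨ eps i = -1) ∧ cfValue (hekSeq A m t eps cs) = some (s - 2 * c)

theorem orbitRel_of_hasHeckoidExpansion (hcf : cfValue A = some r) {m : ℤ} {s : ℚ}
    (hs : HasHeckoidExpansion A m s) : orbitRel r m none (some s) := by
  obtain ⟨t, ht, c, eps, cs, heps, hval⟩ := hs
  refine ⟨moebiusHom (translation ((2 * c : ℤ) : ℚ) * (cfGL (hekSeq A m t eps cs) * inversion)),
    ?_, ?_⟩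
  · rw [map_mul]
    exact mul_mem (translation_mem_Gamma r m c) (hekSeq_mem_Gamma hcf m ht heps cs)
  · simp [moebiusHom_inversion_none, ← cfValue_eq_moebiusHom, hval, moebiusHom_translation_apply]

theorem HasHeckoidExpansion.two_mul_sub {m : ℤ} {s : ℚ} (hs : HasHeckoidExpansion A m s)
    (k : ℤ) : HasHeckoidExpansion A m (2 * k - s) := by
  obtain ⟨t, ht, c, eps, cs, heps, hval⟩ := hs
  refine ⟨t, ht, k - c, -eps, -cs, fun i hi => ?_, ?_⟩
  · rcases heps i hi with h | h <;> simp [h]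
  · rw [hekSeq_neg, cfValue_map_neg, hval]
    simp only [Option.map_some, Option.some.injEq]
    push_cast; ring

def expansionSet (A : List ℤ) (m : ℤ) : Set (Option ℚ) :=
  {x | ∀ s ∈ x, HasHeckoidExpansion A m s}

theorem reflection_mapsTo (A : List ℤ) (m : ℤ) :
    Set.MapsTo (moebiusHom reflection) (expansionSet A m) (expansionSet A m) := by
  rintro (_ | v) hv s hs <;> simp only [moebiusHom_reflection_apply, Option.map_none,
    Option.map_some, Option.mem_def, reduceCtorEq, Option.some.injEq] at hs
  simpa [← hs] using (hv v rfl).two_mul_sub 0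

theorem reflection'_mapsTo (A : List ℤ) (m : ℤ) :
    Set.MapsTo (moebiusHom reflection') (expansionSet A m) (expansionSet A m) := by
  rintro (_ | v) hv s hs <;> simp only [moebiusHom_reflection'_apply, Option.map_none,
    Option.map_some, Option.mem_def, reduceCtorEq, Option.some.injEq] at hs
  simpa [← hs] using (hv v rfl).two_mul_sub 1

theorem parabolic_mapsTo (hcf : cfValue A = some r) (m k : ℤ) :
    Set.MapsTo (moebiusHom (parabolic r.den r.num ((m * k : ℤ) : ℚ)))
      (expansionSet A m) (expansionSet A m) := by
  rw [← cfGL_hekBlock_mul_inversion hcf]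
  rintro (_ | v) hv s hs
  · refine ⟨1, one_pos, 0, fun _ => 1, fun _ => (-1) ^ A.length * k, by simp, ?_⟩
    rw [hekSeq_one]
    simpa [moebiusHom_inversion_none, ← cfValue_eq_moebiusHom] using hs
  · obtain ⟨t, ht, c, eps, cs, heps, hval⟩ := hv v rfl
    have hv' : some v = moebiusHom (translation ((2 * c : ℤ) : ℚ) * cfGL (hekSeq A m t eps cs))
        (some 0) := by
      simp [← cfValue_eq_moebiusHom, hval, moebiusHom_translation_apply]
    -- the parabolic prepends its block to the expansion of `v`, with separator `2c`
    rw [Option.mem_def, hv', ← Equiv.Perm.mul_apply, ← map_mul, ← mul_assoc, ← cfGL_append_cons,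
      ← cfValue_eq_moebiusHom, ← hekSeq_cons A m ht] at hs
    refine ⟨t + 1, by omega, 0, _, _, fun i hi => ?_, by simpa using hs⟩
    split_ifs
    · exact Or.inl rfl
    · exact heps _ (by omega)

theorem Gamma_mapsTo (hcf : cfValue A = some r) (m : ℤ) {g : Equiv.Perm (Option ℚ)}
    (hg : g ∈ Gamma r m) : Set.MapsTo g (expansionSet A m) (expansionSet A m) := by
  induction hg using Subgroup.closure_induction'' with
  | mem g hg =>
    rcases hg with rfl | rfl | rfl
    · rw [rhoPerm_eq_moebiusHom]; exact reflection_mapsTo A m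
    · rw [rhoPerm'_eq_moebiusHom]; exact reflection'_mapsTo A m
    · rw [cPerm_eq_moebiusHom]; simpa using parabolic_mapsTo hcf m 1
  | inv_mem g hg =>
    rcases hg with rfl | rfl | rfl
    · rw [rhoPerm_eq_moebiusHom, ← map_inv, inv_eq_of_mul_eq_one_right reflection_mul_reflection]
      exact reflection_mapsTo A m
    · rw [rhoPerm'_eq_moebiusHom, ← map_inv,
        inv_eq_of_mul_eq_one_right reflection'_mul_reflection']
      exact reflection'_mapsTo A m
    · rw [cPerm_eq_moebiusHom, ← map_inv, ← zpow_neg_one, parabolic_zpow,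
        show ((-1 : ℤ) : ℚ) * m = ((m * -1 : ℤ) : ℚ) by push_cast; ring]
      exact parabolic_mapsTo hcf m (-1)
  | one => exact Set.mapsTo_id _
  | mul g h _ _ hg hh => exact hg.comp hh

end Expansion

theorem orbit_infty_iff_continued_fraction_general (r : ℚ) (m : ℤ) (A : List ℤ)
    (hcf : cfValue A = some r) (s : ℚ) :
    orbitRel r m none (some s) ↔
      ∃ t : ℕ, 0 < t ∧ ∃ (c : ℤ) (eps cs : ℕ → ℤ),
        (∀ i < t, eps i = 1 ∨ eps i = -1) ∧
        cfValue (hekSeq A m t eps cs) = some (s - 2 * c) := by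
  refine ⟨fun ⟨g, hg, hgs⟩ => ?_, orbitRel_of_hasHeckoidExpansion hcf⟩
  exact Gamma_mapsTo hcf m hg (fun _ h => by simp at h) s hgs

/-- For `r = [a₁, …, a_k] ∈ (0,1)` (all `aᵢ > 0`, `a_k ≥ 2`) and an integer
`m = 2n ≥ 3`, a rational number `s` lies in the `Γ_{r,n}`-orbit of `∞` iff
`s = 2c + [ε₁·a, m·c₁, −ε₁·a⁻¹, 2c₂, …, ε_t·a, m·c_{2t−1}, −ε_t·a⁻¹]` for some data as displayed. -/
theorem orbit_infty_iff_continued_fraction (r : ℚ) (hr0 : 0 < r) (hr1 : r < 1)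
    (m : ℤ) (hm : 3 ≤ m) (A : List ℤ) (hA : A ≠ [])
    (hpos : ∀ x ∈ A, 0 < x) (hlast : 2 ≤ A.getLast hA)
    (hcf : cfValue A = some r) (s : ℚ) :
    orbitRel r m none (some s) ↔
      ∃ t : ℕ, 0 < t ∧ ∃ (c : ℤ) (eps cs : ℕ → ℤ),
        (∀ i < t, eps i = 1 ∨ eps i = -1) ∧
        cfValue (hekSeq A m t eps cs) = some (s - 2 * c) :=
  orbit_infty_iff_continued_fraction_general r m A hcf s

end Heckoid
end

section
/- Let r = q/p ∈ (0,1) be a rational number in lowest terms and n ≥ 2 an integer. The image of the word u_r in the even Heckoid group H(r;n) = ⟨a, b | u_r^n⟩ has order exactly n; in particular it is a nontrivial torsion element. -/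
/-!
Send `a ↦ sr 0` and `b ↦ sr 1` in the dihedral group of order `2np`, `p` the denominator of `r`.
Reflections are involutions, so the signs `ε_i` disappear, `v` becomes an alternating product
of the two reflections, and `u_r` becomes the rotation by `p`, which has order exactly `n`.
Since `u_r^n` is the relator, this representation factors through `H(r;n)`, so the order of
`u_r` there is divisible by `n`; it divides `n` because `u_r^n = 1`.
-/

theorem PresentedGroup.orderOf_mk_eq_of_orderOf_map {α G : Type*} [Group G] {w : FreeGroup α}
    {n : ℕ} (φ : FreeGroup α →* G) (hφ : orderOf (φ w) = n) :
    orderOf (PresentedGroup.mk {w ^ n} w) = n := by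
  obtain ⟨f, rfl⟩ := FreeGroup.lift.surjective φ
  have hrel : ∀ x ∈ ({w ^ n} : Set (FreeGroup α)), FreeGroup.lift f x = 1 := by
    rintro _ rfl
    rw [map_pow, ← hφ, pow_orderOf_eq_one]
  refine Nat.dvd_antisymm (orderOf_dvd_of_pow_eq_one ?_) ?_
  · rw [← map_pow]
    exact PresentedGroup.one_of_mem rfl
  · have h := orderOf_map_dvd (PresentedGroup.toGroup hrel) (PresentedGroup.mk _ w)
    rwa [show PresentedGroup.toGroup hrel (PresentedGroup.mk _ w) = FreeGroup.lift f w from rfl,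
      hφ] at h

theorem zpow_eq_self_of_sq_eq_one {G : Type*} [Group G] {x : G} (hx : x ^ 2 = 1) {z : ℤ}
    (hz : Odd z) : x ^ z = x := by
  obtain ⟨m, rfl⟩ := hz
  rw [zpow_add_one, zpow_mul, zpow_ofNat, hx, one_zpow, one_mul]

namespace DihedralGroup

variable {N : ℕ}

theorem sr_zpow_of_odd (j : ZMod N) {z : ℤ} (hz : Odd z) : sr j ^ z = sr j :=
  zpow_eq_self_of_sq_eq_one (by rw [sq, sr_mul_self]) hz

theorem orderOf_r_natCast_mul (n : ℕ) {d : ℕ} (hd : d ≠ 0) :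
    orderOf (r (d : ZMod (n * d))) = n := by
  rw [← r_one_pow, orderOf_pow' _ hd, orderOf_r_one, Nat.gcd_mul_left_left,
    Nat.mul_div_cancel _ (Nat.pos_of_ne_zero hd)]

end DihedralGroup

namespace Heckoid

open DihedralGroup

variable {N : ℕ}

def reflectionRep (N : ℕ) : FG →* DihedralGroup N :=
  FreeGroup.lift fun i => sr ((i : ℕ) : ZMod N)

theorem reflectionRep_genAt (i : ℕ) :
    reflectionRep N (genAt i) = sr ((i % 2 : ℕ) : ZMod N) := by
  unfold genAt
  split_ifs with h
  · simp [reflectionRep, gb, h]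
  · simp [reflectionRep, ga, show i % 2 = 0 by omega]

/-- The image under `reflectionRep` of an alternating word `b^± a^± b^± ⋯` with `m` letters. -/
def altReflections (N m : ℕ) : DihedralGroup N :=
  ((List.range m).map fun i => sr (((i + 1) % 2 : ℕ) : ZMod N)).prod

theorem altReflections_succ (m : ℕ) :
    altReflections N (m + 1) = altReflections N m * sr (((m + 1) % 2 : ℕ) : ZMod N) := by
  simp [altReflections, List.range_succ]

theorem altReflections_two_mul_add_one (k : ℕ) :
    altReflections N (2 * k + 1) = sr ((k : ZMod N) + 1) := by
  induction k with
  | zero => simp [altReflections]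
  | succ k ih =>
    rw [show 2 * (k + 1) + 1 = 2 * k + 1 + 1 + 1 by ring, altReflections_succ,
      altReflections_succ, ih, show (2 * k + 1 + 1) % 2 = 0 by omega,
      show (2 * k + 1 + 1 + 1) % 2 = 1 by omega, Nat.cast_zero, Nat.cast_one, sr_mul_sr,
      r_mul_sr, Nat.cast_succ]
    congr 1
    ring

theorem altReflections_two_mul (k : ℕ) : altReflections N (2 * k) = r (-(k : ZMod N)) := by
  cases k with
  | zero => simp [altReflections]
  | succ k =>
    rw [show 2 * (k + 1) = 2 * k + 1 + 1 by ring, altReflections_succ,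
      altReflections_two_mul_add_one, show (2 * k + 1 + 1) % 2 = 0 by omega, Nat.cast_zero,
      sr_mul_sr, Nat.cast_succ]
    congr 1
    ring

theorem odd_epsSign (q : ℤ) (p i : ℕ) : Odd (epsSign q p i) :=
  Odd.pow (by decide)

theorem reflectionRep_vWord (q : ℤ) (p : ℕ) :
    reflectionRep N (vWord q p) = altReflections N (p - 1) := by
  rw [vWord, map_list_prod, List.map_map, altReflections]
  refine congrArg List.prod (List.map_congr_left fun i _ => ?_)
  rw [Function.comp_apply, map_zpow, reflectionRep_genAt, sr_zpow_of_odd _ (odd_epsSign _ _ _)]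

theorem reflectionRep_uWord (s : ℚ) : reflectionRep N (uWord s) = r (s.den : ZMod N) := by
  have ha : reflectionRep N ga = sr 0 := by simp [reflectionRep, ga]
  have hb : reflectionRep N gb = sr 1 := by simp [reflectionRep, gb]
  rcases Nat.even_or_odd' s.den with ⟨k, hk | hk⟩
  · obtain ⟨j, rfl⟩ : ∃ j, k = j + 1 := Nat.exists_eq_add_one.mpr (by have := s.den_nz; omega)
    rw [uWord, if_neg (by omega), map_mul, map_mul, map_mul, map_inv, map_inv, ha,
      reflectionRep_vWord, hk, show 2 * (j + 1) - 1 = 2 * j + 1 by omega,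
      altReflections_two_mul_add_one, inv_sr, inv_sr, sr_mul_sr, r_mul_sr, sr_mul_sr]
    congr 1
    push_cast
    ring
  · rw [uWord, if_pos (by omega), map_mul, map_mul, map_mul, map_inv, map_zpow, ha, hb,
      sr_zpow_of_odd _ (Odd.pow (by decide)), reflectionRep_vWord, hk, Nat.add_sub_cancel,
      altReflections_two_mul, inv_r, neg_neg, sr_mul_r, sr_mul_sr, r_mul_r]
    congr 1
    push_cast
    ring

theorem orderOf_uWord_eq_general (r : ℚ) (n : ℕ) (hn : 2 ≤ n) :
    orderOf (hMk r n (uWord r)) = n ∧ hMk r n (uWord r) ≠ 1 ∧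
      IsOfFinOrder (hMk r n (uWord r)) := by
  have hord : orderOf (hMk r n (uWord r)) = n :=
    PresentedGroup.orderOf_mk_eq_of_orderOf_map (reflectionRep (n * r.den)) <| by
      rw [reflectionRep_uWord, orderOf_r_natCast_mul _ r.den_nz]
  refine ⟨hord, fun h => ?_, orderOf_pos_iff.mp (by omega)⟩
  rw [h, orderOf_one] at hord
  omega

/-- The image of `u_r` in `H(r;n) = ⟨a,b ∣ u_r^n⟩` has order exactly `n`;
in particular it is a nontrivial torsion element. -/
theorem orderOf_uWord_eq (r : ℚ) (hr0 : 0 < r) (hr1 : r < 1) (n : ℕ) (hn : 2 ≤ n) :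
    orderOf (hMk r n (uWord r)) = n ∧ hMk r n (uWord r) ≠ 1 ∧
      IsOfFinOrder (hMk r n (uWord r)) :=
  orderOf_uWord_eq_general r n hn

end Heckoid
end

section
/- Let r = q/p ∈ (0,1) be a rational number in lowest terms and let m = 2n ≥ 3 be an integer (n an integer or half-integer with n > 1). Then r does not belong to the Γ_{r,n}-orbit of ∞ in ℚ ∪ {∞}; that is, no element of the group Γ_{r,n} generated by ρ, ρ', and c maps ∞ to r. -/
/-!
Writing `r = q/p`, each generator of `Γ_{r,n}` and its inverse is the Möbius transformation of an
integer matrix `[[A, B], [C, D]]` of determinant `±1` with `m p² ∣ C`. Such a matrix maps a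
fraction `a/c` in lowest terms with `m p² ∣ c` to `(Aa + Bc)/(Ca + Dc)`, again in lowest terms and
with `m p² ∣ Ca + Dc`. Hence every point of the orbit of `∞ = 1/0` has denominator divisible by
`m p²`, whereas `r` has denominator `p`, and `m p² ∤ p` once `m ≥ 2`.
-/

theorem IsCoprime.of_isUnit_det {a c A B C D : ℤ} (h : IsCoprime a c)
    (hdet : IsUnit (A * D - B * C)) : IsCoprime (A * a + B * c) (C * a + D * c) := by
  obtain ⟨u, v, huv⟩ := h
  have he := Int.isUnit_mul_self hdet
  -- the inverse matrix is `(AD - BC)` times the adjugate `[[D, -B], [-C, A]]`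
  exact ⟨(A * D - B * C) * (u * D - v * C), (A * D - B * C) * (v * A - u * B), by
    linear_combination (u * a + v * c) * he + huv⟩

namespace Heckoid

open Set
open scoped Pointwise

def ofHomog (x y : ℚ) : Option ℚ := if y = 0 then none else some (x / y)

theorem mfun_ofHomog (A B C D : ℚ) {x y : ℚ} (hxy : x ≠ 0 ∨ y ≠ 0) :
    mfun A B C D (ofHomog x y) = ofHomog (A * x + B * y) (C * x + D * y) := by
  by_cases hy : y = 0
  · subst hy
    have hx : x ≠ 0 := by simpa using hxy
    by_cases hC : C = 0 <;> simp [mfun, ofHomog, hC, hx, mul_div_mul_right]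
  · have hden : C * (x / y) + D = (C * x + D * y) / y := by field_simp
    have hnum : A * (x / y) + B = (A * x + B * y) / y := by field_simp
    unfold ofHomog
    rw [if_neg hy]
    simp only [mfun, hden, hnum, div_eq_zero_iff, hy, or_false, div_div_div_cancel_right₀ hy]

def cuspsDvd (k : ℤ) : Set (Option ℚ) :=
  {z | ∃ a c : ℤ, IsCoprime a c ∧ k ∣ c ∧ z = ofHomog a c}

theorem none_mem_cuspsDvd (k : ℤ) : none ∈ cuspsDvd k :=
  ⟨1, 0, isCoprime_one_left, dvd_zero k, by simp [ofHomog]⟩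

theorem mapsTo_mfun_cuspsDvd {k A B C D : ℤ} (hdet : IsUnit (A * D - B * C)) (hC : k ∣ C) :
    MapsTo (mfun A B C D) (cuspsDvd k) (cuspsDvd k) := by
  rintro _ ⟨a, c, hac, hkc, rfl⟩
  have hne : (a : ℚ) ≠ 0 ∨ (c : ℚ) ≠ 0 := by
    contrapose! hac
    obtain ⟨rfl, rfl⟩ : a = 0 ∧ c = 0 := by exact_mod_cast hac
    exact not_isCoprime_zero_zero
  refine ⟨A * a + B * c, C * a + D * c, hac.of_isUnit_det hdet,
    dvd_add (hC.mul_right a) (hkc.mul_left D), ?_⟩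
  rw [mfun_ofHomog _ _ _ _ hne]
  push_cast
  rfl

theorem moebius_mem_stabilizer_cuspsDvd {k A B C D : ℤ} (h : (A : ℚ) * D - B * C ≠ 0)
    (hdet : IsUnit (A * D - B * C)) (hC : k ∣ C) :
    moebius A B C D h ∈ MulAction.stabilizer (Equiv.Perm (Option ℚ)) (cuspsDvd k) := by
  have hinv : MapsTo (mfun D (-B) (-C) A) (cuspsDvd k) (cuspsDvd k) := by
    have := mapsTo_mfun_cuspsDvd (A := D) (B := -B) (C := -C) (D := A)
      (by rwa [show D * A - -B * -C = A * D - B * C by ring]) (dvd_neg.mpr hC)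
    simpa using this
  refine MulAction.mem_stabilizer_set.mpr fun z => ⟨fun hz => ?_, fun hz => ?_⟩
  · convert hinv hz
    exact ((moebius _ _ _ _ h).symm_apply_apply z).symm
  · exact mapsTo_mfun_cuspsDvd hdet hC hz

theorem Gamma_le_stabilizer_cuspsDvd (r : ℚ) (m : ℤ) :
    Gamma r m ≤ MulAction.stabilizer (Equiv.Perm (Option ℚ)) (cuspsDvd (m * r.den ^ 2)) := by
  refine (Subgroup.closure_le _).mpr ?_
  rintro g (rfl | rfl | rfl)
  · exact moebius_mem_stabilizer_cuspsDvd (A := -1) (B := 0) (C := 0) (D := 1)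
      (by norm_num) (by norm_num) (dvd_zero _)
  · exact moebius_mem_stabilizer_cuspsDvd (A := -1) (B := 2) (C := 0) (D := 1)
      (by norm_num) (by norm_num) (dvd_zero _)
  · have h := moebius_mem_stabilizer_cuspsDvd (A := 1 + m * r.den * r.num) (B := -(m * r.num ^ 2))
      (C := m * r.den ^ 2) (D := 1 - m * r.den * r.num) (by push_cast; ring_nf; norm_num)
      (by ring_nf; exact isUnit_one) dvd_rfl
    push_cast at h
    exact h

theorem dvd_den_of_ofHomog_eq {a c : ℤ} {x : ℚ} (hac : IsCoprime a c)
    (hx : ofHomog a c = some x) : c ∣ x.den := by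
  have hc : (c : ℚ) ≠ 0 := by
    rintro hc
    simp [ofHomog, hc] at hx
  simp only [ofHomog, if_neg hc, Option.some.injEq] at hx
  have hxc : a * x.den = x.num * c := by
    rw [← x.num_div_den, div_eq_div_iff hc (by positivity)] at hx
    exact_mod_cast hx
  exact hac.symm.dvd_of_dvd_mul_left ⟨x.num, by linear_combination hxc⟩

theorem not_mul_sq_dvd_self {m p : ℤ} (hm : 1 < m) (hp : 0 < p) : ¬ m * p ^ 2 ∣ p := fun h => by
  nlinarith [Int.le_of_dvd hp h]

theorem r_not_in_orbit_of_infty_general (r : ℚ) (m : ℤ) (hm : 3 ≤ m) :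
    ¬ orbitRel r m none (some r) := by
  rintro ⟨g, hg, hgr⟩
  have hr : some r ∈ cuspsDvd (m * r.den ^ 2) := by
    rw [← hgr, ← Equiv.Perm.smul_def]
    exact (MulAction.mem_stabilizer_set.mp (Gamma_le_stabilizer_cuspsDvd r m hg) none).mpr
      (none_mem_cuspsDvd _)
  obtain ⟨a, c, hac, hkc, hrac⟩ := hr
  exact not_mul_sq_dvd_self (by omega) (mod_cast r.pos)
    (hkc.trans (dvd_den_of_ofHomog_eq hac hrac.symm))

/-- For `r ∈ (0,1)` and an integer `m = 2n ≥ 3`, the slope `r` does not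
belong to the `Γ_{r,n}`-orbit of `∞`: no element of `Γ_{r,n}` maps `∞` to `r`. -/
theorem r_not_in_orbit_of_infty (r : ℚ) (hr0 : 0 < r) (hr1 : r < 1)
    (m : ℤ) (hm : 3 ≤ m) :
    ¬ orbitRel r m none (some r) :=
  r_not_in_orbit_of_infty_general r m hm

end Heckoid
end
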